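/- arXiv:1307.7309 — 2 statements merged into one kernel-verified Lean document; each statement's English description precedes it below -/
import Mathlib

section
/- Under the assumptions of the sliding-window deviation lemma (decisions with rewards r_k·X_k, a random set Λ ⊆ ∪_{s≥1} Λ(s) with |Λ(s)| ≤ 1, t_k(n) ≥ ε·s for n ∈ Λ(s), and the event {n ∈ Λ(s)} being F_n-measurable), the expected number of instants n ∈ Λ at which |μ̂_k(n) − E[μ̂_k(n)]| > δ is at most r_k²/(ε·δ²). -/
/-!
By Hoeffding's lemma the centred rewards `X i - r θ` are sub-Gaussian with variance proxy `r²/4`,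
so for every `l` the process `exp (l S_t - t r² l² / 8)`, `S_t = ∑_{i<t} (X i - r θ)`, is a
nonnegative supermartingale. Ville's maximal inequality for it, with `l = 4δ/r²`, bounds the
probability that the empirical mean deviates by more than `δ` at *some* sample size `t ≥ x`
by `2 exp (-2xδ²/r²)`, uniformly over all random sample sizes. Since each `Λ(s)` has at most
one element, on which `t_k(n) ≥ εs`, the number of bad instants of `Λ` is at most the number of
`s ≥ 1` for which such a deviation happens, whose expectation is at most
`∑_{s≥1} 2 exp (-2εsδ²/r²) ≤ r²/(εδ²)`.
-/

open MeasureTheory ProbabilityTheory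
open scoped ENNReal NNReal

section Ville

variable {Ω : Type*} {mΩ : MeasurableSpace Ω} {μ : Measure Ω}

/- Ville's inequality: `hstep` says that `M` is a supermartingale as long as no `A k` has occurred,
and the proof stops `M` at the first `n` with `ω ∈ A n`. -/
theorem mul_measure_iUnion_le_of_setLIntegral_succ_le {M : ℕ → Ω → ℝ≥0∞} {A : ℕ → Set Ω}
    {c : ℝ≥0∞} (hA : ∀ n, MeasurableSet (A n)) (hc : ∀ n, ∀ ω ∈ A n, c ≤ M n ω)
    (hstep : ∀ n, ∫⁻ ω in (⋃ k < n + 1, A k)ᶜ, M (n + 1) ω ∂μ ≤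
      ∫⁻ ω in (⋃ k < n + 1, A k)ᶜ, M n ω ∂μ) :
    c * μ (⋃ n, A n) ≤ ∫⁻ ω, M 0 ω ∂μ := by
  have hstopped : ∀ n, c * μ (⋃ k < n, A k) + ∫⁻ ω in (⋃ k < n, A k)ᶜ, M n ω ∂μ ≤
      ∫⁻ ω, M 0 ω ∂μ := by
    intro n
    induction n with
    | zero => simp
    | succ n ih =>
      set U := ⋃ k < n, A k
      have hU : MeasurableSet U := .biUnion (Set.to_countable _) fun k _ => hA k
      have hsucc : ⋃ k < n + 1, A k = U ∪ A n := Set.biUnion_lt_succ A n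
      have hcompl : (⋃ k < n + 1, A k)ᶜ = Uᶜ \ A n := by
        rw [hsucc, Set.compl_union, Set.sdiff_eq]
      have hsplit : μ (⋃ k < n + 1, A k) ≤ μ U + μ (Uᶜ ∩ A n) := by
        rw [hsucc, ← Set.union_sdiff_self, Set.sdiff_eq, Set.inter_comm]
        exact measure_union_le _ _
      have hstep' := hstep n
      rw [hcompl] at hstep'
      calc c * μ (⋃ k < n + 1, A k) + ∫⁻ ω in (⋃ k < n + 1, A k)ᶜ, M (n + 1) ω ∂μ
          ≤ c * μ U + c * μ (Uᶜ ∩ A n) + ∫⁻ ω in Uᶜ \ A n, M n ω ∂μ := by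
            rw [← mul_add, hcompl]
            exact add_le_add (mul_le_mul_right hsplit c) hstep'
        _ ≤ c * μ U + ∫⁻ ω in Uᶜ ∩ A n, M n ω ∂μ + ∫⁻ ω in Uᶜ \ A n, M n ω ∂μ := by
            gcongr
            rw [← setLIntegral_const]
            exact setLIntegral_mono' (hU.compl.inter (hA n)) fun ω hω => hc n ω hω.2
        _ = c * μ U + ∫⁻ ω in Uᶜ, M n ω ∂μ := by
            rw [add_assoc, lintegral_inter_add_sdiff _ _ (hA n)]
        _ ≤ ∫⁻ ω, M 0 ω ∂μ := ih
  rw [measure_iUnion_eq_iSup_accumulate, ENNReal.mul_iSup]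
  refine iSup_le fun n => le_trans ?_ (le_trans le_self_add (hstopped (n + 1)))
  gcongr
  intro ω hω
  simpa [Set.accumulate_def, Nat.lt_succ_iff] using hω

end Ville

section ExpSupermartingale

variable {Ω : Type*} {mΩ : MeasurableSpace Ω} {μ : Measure Ω} {Y : ℕ → Ω → ℝ} {v : ℝ≥0}

abbrev pastMeasurableSpace (Y : ℕ → Ω → ℝ) (n : ℕ) : MeasurableSpace Ω :=
  ⨆ i < n, MeasurableSpace.comap (Y i) inferInstance

lemma pastMeasurableSpace_le (hmeas : ∀ i, Measurable (Y i)) (n : ℕ) :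
    pastMeasurableSpace Y n ≤ mΩ :=
  iSup₂_le fun i _ => (hmeas i).comap_le

lemma measurable_sum_range_of_le {n k : ℕ} (hk : k ≤ n) :
    Measurable[pastMeasurableSpace Y n] fun ω => ∑ i ∈ Finset.range k, Y i ω :=
  Finset.measurable_fun_sum _ fun i hi => Measurable.of_comap_le <|
    le_iSup₂ (f := fun i (_ : i < n) => MeasurableSpace.comap (Y i) inferInstance) i
      ((Finset.mem_range.1 hi).trans_le hk)

lemma indep_pastMeasurableSpace (hmeas : ∀ i, Measurable (Y i)) (hindep : iIndepFun Y μ)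
    (n : ℕ) : Indep (pastMeasurableSpace Y n) (MeasurableSpace.comap (Y n) inferInstance) μ :=
  indep_of_indep_of_le_right (indep_iSup_of_disjoint (fun i => (hmeas i).comap_le)
      ((iIndepFun_iff_iIndep _ _ _).1 hindep) (S := Set.Iio n) (T := {n}) (by simp)) <|
    le_iSup₂ (f := fun i (_ : i ∈ ({n} : Set ℕ)) => MeasurableSpace.comap (Y i) inferInstance)
      n rfl

noncomputable def expSupermartingale (Y : ℕ → Ω → ℝ) (v : ℝ≥0) (l : ℝ) (n : ℕ) (ω : Ω) :
    ℝ≥0∞ :=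
  ENNReal.ofReal (Real.exp (l * ∑ i ∈ Finset.range n, Y i ω - n * (v * l ^ 2 / 2)))

lemma expSupermartingale_zero (l : ℝ) : expSupermartingale Y v l 0 = 1 := by
  ext ω
  simp [expSupermartingale]

lemma expSupermartingale_succ (l : ℝ) (n : ℕ) (ω : Ω) :
    expSupermartingale Y v l (n + 1) ω = ENNReal.ofReal (Real.exp (-(v * l ^ 2 / 2))) *
      (expSupermartingale Y v l n ω * ENNReal.ofReal (Real.exp (l * Y n ω))) := by
  simp only [expSupermartingale]
  rw [← ENNReal.ofReal_mul (Real.exp_nonneg _), ← ENNReal.ofReal_mul (Real.exp_nonneg _),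
    ← Real.exp_add, ← Real.exp_add, Finset.sum_range_succ]
  push_cast
  ring_nf

lemma measurable_expSupermartingale (l : ℝ) (n : ℕ) :
    Measurable[pastMeasurableSpace Y n] (expSupermartingale Y v l n) := by
  have := measurable_sum_range_of_le (Y := Y) (le_refl n)
  unfold expSupermartingale
  fun_prop

lemma ProbabilityTheory.HasSubgaussianMGF.lintegral_ofReal_exp_mul_le {X : Ω → ℝ}
    (h : HasSubgaussianMGF X v μ) (l : ℝ) :
    ∫⁻ ω, ENNReal.ofReal (Real.exp (l * X ω)) ∂μ ≤ ENNReal.ofReal (Real.exp (v * l ^ 2 / 2)) := by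
  rw [← ofReal_integral_eq_lintegral_ofReal (h.integrable_exp_mul l)
    (ae_of_all _ fun _ => Real.exp_nonneg _)]
  exact ENNReal.ofReal_le_ofReal (h.mgf_le l)

lemma setLIntegral_expSupermartingale_succ_le (hmeas : ∀ i, Measurable (Y i))
    (hindep : iIndepFun Y μ) {n : ℕ} (hY : HasSubgaussianMGF (Y n) v μ) (l : ℝ) {G : Set Ω}
    (hG : MeasurableSet[pastMeasurableSpace Y n] G) :
    ∫⁻ ω in G, expSupermartingale Y v l (n + 1) ω ∂μ ≤
      ∫⁻ ω in G, expSupermartingale Y v l n ω ∂μ := by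
  set M := expSupermartingale Y v l
  set C := ENNReal.ofReal (Real.exp (-(v * l ^ 2 / 2)))
  have hpast := pastMeasurableSpace_le hmeas n
  have hE : Measurable[MeasurableSpace.comap (Y n) inferInstance]
      fun ω => ENNReal.ofReal (Real.exp (l * Y n ω)) := by
    have : Measurable[MeasurableSpace.comap (Y n) inferInstance] (Y n) :=
      Measurable.of_comap_le le_rfl
    fun_prop
  have hsplit : G.indicator (M (n + 1)) =
      fun ω => C * (G.indicator (M n) ω * ENNReal.ofReal (Real.exp (l * Y n ω))) := by
    ext ω
    by_cases hω : ω ∈ G <;> simp [hω, M, C, expSupermartingale_succ l n]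
  rw [← lintegral_indicator (hpast _ hG), ← lintegral_indicator (hpast _ hG), hsplit,
    lintegral_const_mul' _ _ ENNReal.ofReal_ne_top,
    lintegral_mul_eq_lintegral_mul_lintegral_of_independent_measurableSpace hpast
      (hmeas n).comap_le (indep_pastMeasurableSpace hmeas hindep n)
      ((measurable_expSupermartingale l n).indicator hG) hE]
  calc C * ((∫⁻ ω, G.indicator (M n) ω ∂μ) * ∫⁻ ω, ENNReal.ofReal (Real.exp (l * Y n ω)) ∂μ)
      ≤ C * ((∫⁻ ω, G.indicator (M n) ω ∂μ) * ENNReal.ofReal (Real.exp (v * l ^ 2 / 2))) := by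
        gcongr
        exact hY.lintegral_ofReal_exp_mul_le l
    _ = ∫⁻ ω, G.indicator (M n) ω ∂μ := by
        rw [mul_comm, mul_assoc, ← ENNReal.ofReal_mul (Real.exp_nonneg _), ← Real.exp_add]
        simp

theorem measure_exists_sum_range_gt_le (hmeas : ∀ i, Measurable (Y i))
    (hindep : iIndepFun Y μ) (hY : ∀ i, HasSubgaussianMGF (Y i) v μ) (hv : 0 < v) {δ : ℝ}
    (hδ : 0 ≤ δ) (x : ℝ) :
    μ {ω | ∃ t : ℕ, x ≤ t ∧ t * δ < ∑ i ∈ Finset.range t, Y i ω} ≤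
      ENNReal.ofReal (Real.exp (-(x * δ ^ 2 / (2 * v)))) := by
  have := hindep.isProbabilityMeasure
  -- this `l` maximizes `l δ - v l² / 2`, the exponent gained per step on the deviation event
  set l := δ / v
  set K : ℝ := v * l ^ 2 / 2
  have hK : K = δ ^ 2 / (2 * v) := by simp only [K, l]; field_simp
  set A : ℕ → Set Ω := fun t => {ω | x ≤ t ∧ t * δ < ∑ i ∈ Finset.range t, Y i ω}
  have hA : ∀ t, MeasurableSet (A t) := fun t =>
    (MeasurableSet.const _).inter
      (measurableSet_lt (by fun_prop) (Finset.measurable_fun_sum _ fun i _ => hmeas i))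
  have hc : ∀ t, ∀ ω ∈ A t,
      ENNReal.ofReal (Real.exp (x * K)) ≤ expSupermartingale Y v l t ω := by
    rintro t ω ⟨hxt, hsum⟩
    refine ENNReal.ofReal_le_ofReal (Real.exp_le_exp.2 ?_)
    calc x * K ≤ t * K := mul_le_mul_of_nonneg_right hxt (by positivity)
      _ = l * (t * δ) - t * K := by simp only [K, l]; field_simp; ring
      _ ≤ l * ∑ i ∈ Finset.range t, Y i ω - t * K := by gcongr
  have hstep : ∀ n, ∫⁻ ω in (⋃ k < n + 1, A k)ᶜ, expSupermartingale Y v l (n + 1) ω ∂μ ≤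
      ∫⁻ ω in (⋃ k < n + 1, A k)ᶜ, expSupermartingale Y v l n ω ∂μ := by
    intro n
    refine setLIntegral_expSupermartingale_succ_le hmeas hindep (hY n) l ?_
    refine (MeasurableSet.biUnion (Set.to_countable _) fun k hk => ?_).compl
    exact (MeasurableSet.const _).inter (measurableSet_lt (by fun_prop)
      (measurable_sum_range_of_le (Nat.lt_succ_iff.1 hk)))
  have hville := mul_measure_iUnion_le_of_setLIntegral_succ_le hA hc hstep
  rw [expSupermartingale_zero, Pi.one_def, lintegral_const, measure_univ, one_mul] at hville
  have hunion : {ω | ∃ t : ℕ, x ≤ t ∧ t * δ < ∑ i ∈ Finset.range t, Y i ω} = ⋃ t, A t := by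
    ext ω
    simp [A]
  rw [hunion, mul_div_assoc, ← hK, Real.exp_neg, ENNReal.ofReal_inv_of_pos (Real.exp_pos _),
    ENNReal.le_inv_iff_mul_le, mul_comm]
  exact hville

end ExpSupermartingale

section Deviation

variable {Ω : Type*} {mΩ : MeasurableSpace Ω} {μ : Measure Ω} {X : ℕ → Ω → ℝ}

lemma sum_range_sub_eq_mul_mean_sub (X : ℕ → ℝ) (c : ℝ) {t : ℕ} (ht : t ≠ 0) :
    ∑ i ∈ Finset.range t, (X i - c) = t * (1 / (t : ℝ) * ∑ i ∈ Finset.range t, X i - c) := by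
  rw [Finset.sum_sub_distrib, Finset.sum_const, Finset.card_range, nsmul_eq_mul]
  field_simp

def meanDeviationEvent (X : ℕ → Ω → ℝ) (c δ x : ℝ) : Set Ω :=
  {ω | ∃ t : ℕ, x ≤ t ∧ δ < |1 / (t : ℝ) * ∑ i ∈ Finset.range t, X i ω - c|}

lemma measurableSet_meanDeviationEvent (hmeas : ∀ i, Measurable (X i)) (c δ x : ℝ) :
    MeasurableSet (meanDeviationEvent X c δ x) := by
  simp only [meanDeviationEvent, Set.ofPred_exists]
  exact .iUnion fun t => (MeasurableSet.const _).inter <| measurableSet_lt measurable_const <|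
    (((Finset.measurable_fun_sum _ fun i _ => hmeas i).const_mul _).sub_const _).abs

theorem measure_meanDeviationEvent_le (hmeas : ∀ i, Measurable (X i))
    (hindep : iIndepFun X μ) {a b c : ℝ} (hab : a < b)
    (hbound : ∀ i, ∀ᵐ ω ∂μ, X i ω ∈ Set.Icc a b) (hmean : ∀ i, ∫ ω, X i ω ∂μ = c)
    {δ : ℝ} (hδ : 0 ≤ δ) {x : ℝ} (hx : 0 < x) :
    μ (meanDeviationEvent X c δ x) ≤
      2 * ENNReal.ofReal (Real.exp (-(2 * x * δ ^ 2 / (b - a) ^ 2))) := by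
  have := hindep.isProbabilityMeasure
  set v : ℝ≥0 := (‖b - a‖₊ / 2) ^ 2
  have hv : (v : ℝ) = ((b - a) / 2) ^ 2 := by
    simp [v, Real.norm_eq_abs, abs_of_pos (sub_pos.2 hab)]
  have hv0 : 0 < v := by rw [← NNReal.coe_pos, hv]; nlinarith
  have hsub : ∀ i, HasSubgaussianMGF (fun ω => X i ω - c) v μ := fun i =>
    hmean i ▸ hasSubgaussianMGF_of_mem_Icc (hmeas i).aemeasurable (hbound i)
  have hupper := measure_exists_sum_range_gt_le (fun i => (hmeas i).sub_const c)
    (hindep.comp (fun _ y => y - c) fun _ => measurable_id.sub_const c) hsub hv0 hδ x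
  have hlower := measure_exists_sum_range_gt_le (Y := fun i ω => -(X i ω - c))
    (fun i => ((hmeas i).sub_const c).neg)
    (hindep.comp (fun _ y => -(y - c)) fun _ => (measurable_id.sub_const c).neg)
    (fun i => (hsub i).neg) hv0 hδ x
  have hexp : x * δ ^ 2 / (2 * v) = 2 * x * δ ^ 2 / (b - a) ^ 2 := by
    rw [hv]; field_simp
  rw [hexp] at hupper hlower
  calc μ (meanDeviationEvent X c δ x)
      ≤ μ ({ω | ∃ t : ℕ, x ≤ t ∧ t * δ < ∑ i ∈ Finset.range t, (X i ω - c)} ∪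
          {ω | ∃ t : ℕ, x ≤ t ∧ t * δ < ∑ i ∈ Finset.range t, -(X i ω - c)}) := by
        refine measure_mono fun ω ⟨t, hxt, hdev⟩ => ?_
        have ht : (0 : ℝ) < t := hx.trans_le hxt
        have hsum := sum_range_sub_eq_mul_mean_sub (X · ω) c (Nat.cast_pos.1 ht).ne'
        rcases lt_abs.1 hdev with hdev | hdev
        · exact Or.inl ⟨t, hxt, by rw [hsum]; gcongr⟩
        · exact Or.inr ⟨t, hxt, by rw [Finset.sum_neg_distrib, hsum, ← mul_neg]; gcongr⟩
    _ ≤ 2 * ENNReal.ofReal (Real.exp (-(2 * x * δ ^ 2 / (b - a) ^ 2))) := by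
        rw [two_mul]
        exact (measure_union_le _ _).trans (add_le_add hupper hlower)

end Deviation

lemma tsum_exp_neg_mul_succ_le {a : ℝ} (ha : 0 < a) :
    ∑' s : ℕ, ENNReal.ofReal (Real.exp (-(a * (s + 1)))) ≤ ENNReal.ofReal (1 / a) := by
  set q := Real.exp (-a)
  have hq1 : q < 1 := Real.exp_lt_one_iff.2 (neg_lt_zero.2 ha)
  have hterm : ∀ s : ℕ, Real.exp (-(a * (s + 1))) = q * q ^ s := by
    intro s
    rw [← pow_succ', ← Real.exp_nat_mul]
    push_cast
    ring_nf
  simp_rw [hterm]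
  rw [← ENNReal.ofReal_tsum_of_nonneg (fun s => by positivity)
    ((summable_geometric_of_lt_one (by positivity) hq1).mul_left q), tsum_mul_left,
    tsum_geometric_of_lt_one (by positivity) hq1]
  refine ENNReal.ofReal_le_ofReal ?_
  -- `q / (1 - q) = 1 / (exp a - 1)` and `a ≤ exp a - 1`
  have hqa : q * Real.exp a = 1 := by rw [← Real.exp_add]; simp
  rw [← div_eq_mul_inv, div_le_div_iff₀ (by linarith) ha]
  nlinarith [Real.add_one_le_exp a]

lemma tsum_indicator_one_le_tsum_indicator_nonempty {α : Type*} {S : Set α} {T : ℕ → Set α}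
    (hST : S ⊆ ⋃ s, T s) (hT : ∀ s, (T s).Subsingleton) :
    ∑' a, S.indicator (1 : α → ℝ≥0∞) a ≤
      ∑' s, {s | (T s ∩ S).Nonempty}.indicator (1 : ℕ → ℝ≥0∞) s := by
  calc ∑' a, S.indicator (1 : α → ℝ≥0∞) a
      ≤ ∑' a, ∑' s, (T s ∩ S).indicator (1 : α → ℝ≥0∞) a := by
        refine ENNReal.tsum_le_tsum fun a => ?_
        by_cases ha : a ∈ S
        · obtain ⟨s, hs⟩ := Set.mem_iUnion.1 (hST ha)
          simpa [ha, hs] using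
            ENNReal.le_tsum (f := fun s => (T s ∩ S).indicator (1 : α → ℝ≥0∞) a) s
        · simp [ha]
    _ = ∑' s, ∑' a, (T s ∩ S).indicator (1 : α → ℝ≥0∞) a := ENNReal.tsum_comm
    _ ≤ ∑' s, {s | (T s ∩ S).Nonempty}.indicator (1 : ℕ → ℝ≥0∞) s := by
        refine ENNReal.tsum_le_tsum fun s => ?_
        rcases ((hT s).anti (Set.inter_subset_left (t := S))).eq_empty_or_singleton with h | ⟨a, h⟩
        · simp [h]
        · have hs : s ∈ {s | (T s ∩ S).Nonempty} := by
            simp only [Set.mem_ofPred_eq, h, Set.singleton_nonempty]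
          rw [Set.indicator_of_mem hs, h,
            tsum_eq_single a fun b hb => Set.indicator_of_notMem (s := {a}) hb _]
          simp

lemma tsum_indicator_le_tsum_indicator_meanDeviationEvent {Ω : Type*} {X : ℕ → Ω → ℝ}
    {tk : ℕ → Ω → ℕ} {μhat : ℕ → Ω → ℝ}
    (hμhat : ∀ n ω, μhat n ω = (1 / (tk n ω : ℝ)) * ∑ i ∈ Finset.range (tk n ω), X i ω)
    {c ε δ : ℝ} {Λ : Ω → Set ℕ} {Λs : ℕ → Ω → Set ℕ} (hcover : ∀ ω, Λ ω ⊆ ⋃ s ≥ 1, Λs s ω)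
    (hcount : ∀ s : ℕ, 1 ≤ s → ∀ ω, ∀ n ∈ Λs s ω, ε * s ≤ (tk n ω : ℝ))
    (hsingle : ∀ s ω, (Λs s ω).Subsingleton) (ω : Ω) :
    ∑' n : ℕ, Set.indicator {ω' | n ∈ Λ ω' ∧ δ < |μhat n ω' - c|} (fun _ => (1 : ℝ≥0∞)) ω ≤
      ∑' s : ℕ, (meanDeviationEvent X c δ (ε * (s + 1))).indicator 1 ω := by
  set S := {n | n ∈ Λ ω ∧ δ < |μhat n ω - c|}
  have hST : S ⊆ ⋃ s, Λs (s + 1) ω := by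
    intro n hn
    obtain ⟨s, hs, hns⟩ := Set.mem_iUnion₂.1 (hcover ω hn.1)
    obtain ⟨s, rfl⟩ := Nat.exists_eq_add_of_le' hs
    exact Set.mem_iUnion.2 ⟨s, hns⟩
  calc ∑' n : ℕ, Set.indicator {ω' | n ∈ Λ ω' ∧ δ < |μhat n ω' - c|} (fun _ => 1) ω
      = ∑' n, S.indicator 1 n := rfl
    _ ≤ ∑' s, {s | (Λs (s + 1) ω ∩ S).Nonempty}.indicator 1 s :=
      tsum_indicator_one_le_tsum_indicator_nonempty hST fun s => hsingle (s + 1) ω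
    _ ≤ ∑' s : ℕ, (meanDeviationEvent X c δ (ε * (s + 1))).indicator 1 ω := by
      refine ENNReal.tsum_le_tsum fun s => Set.indicator_apply_le' (fun ⟨n, hns, hn⟩ => ?_)
        fun _ => zero_le
      refine (Set.indicator_of_mem (s := meanDeviationEvent X c δ (ε * (s + 1))) (f := 1)
        ⟨tk n ω, ?_, hμhat n ω ▸ hn.2⟩).ge
      exact_mod_cast hcount (s + 1) (Nat.le_add_left 1 s) ω n hns

theorem sliding_set_deviation_general {Ω : Type*} {m0 : MeasurableSpace Ω}
    (μ : Measure Ω)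
    (r θ : ℝ) (hr : 0 < r)
    (X : ℕ → Ω → ℝ) (hXmeas : ∀ i, Measurable (X i))
    (hXindep : iIndepFun X μ)
    (hXbound : ∀ i, ∀ᵐ ω ∂μ, X i ω ∈ Set.Icc 0 r)
    (hXmean : ∀ i, ∫ ω, X i ω ∂μ = r * θ)
    (tk : ℕ → Ω → ℕ) (μhat : ℕ → Ω → ℝ)
    (hμhat : ∀ n ω, μhat n ω = (1 / (tk n ω : ℝ)) * ∑ i ∈ Finset.range (tk n ω), X i ω)
    (ε δ : ℝ) (hε : 0 < ε) (hδ : 0 < δ)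
    (Λ : Ω → Set ℕ) (Λs : ℕ → Ω → Set ℕ)
    (hcover : ∀ ω, Λ ω ⊆ ⋃ s ≥ 1, Λs s ω)
    (hcount : ∀ s : ℕ, 1 ≤ s → ∀ ω, ∀ n ∈ Λs s ω, ε * s ≤ (tk n ω : ℝ))
    (hsingle : ∀ s ω, (Λs s ω).Subsingleton) :
    ∫⁻ ω, ∑' n : ℕ,
        Set.indicator {ω' | n ∈ Λ ω' ∧ δ < |μhat n ω' - r * θ|} (fun _ => (1 : ℝ≥0∞)) ω ∂μ
      ≤ ENNReal.ofReal (r ^ 2 / (ε * δ ^ 2)) := by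
  set a := 2 * ε * δ ^ 2 / r ^ 2
  set B := fun s : ℕ => meanDeviationEvent X (r * θ) δ (ε * (s + 1))
  have hB : ∀ s, MeasurableSet (B s) := fun s => measurableSet_meanDeviationEvent hXmeas _ _ _
  have hBle : ∀ s : ℕ, μ (B s) ≤ 2 * ENNReal.ofReal (Real.exp (-(a * (s + 1)))) := fun s =>
    (measure_meanDeviationEvent_le hXmeas hXindep hr hXbound hXmean hδ.le
      (by positivity)).trans_eq (by simp only [a, sub_zero]; ring_nf)
  calc ∫⁻ ω, ∑' n : ℕ,
        Set.indicator {ω' | n ∈ Λ ω' ∧ δ < |μhat n ω' - r * θ|} (fun _ => (1 : ℝ≥0∞)) ω ∂μ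
      ≤ ∫⁻ ω, ∑' s : ℕ, (B s).indicator 1 ω ∂μ := lintegral_mono
        (tsum_indicator_le_tsum_indicator_meanDeviationEvent hμhat hcover hcount hsingle)
    _ = ∑' s : ℕ, μ (B s) := by
        rw [lintegral_tsum fun s => (measurable_one.indicator (hB s)).aemeasurable]
        simp_rw [lintegral_indicator_one (hB _)]
    _ ≤ 2 * ∑' s : ℕ, ENNReal.ofReal (Real.exp (-(a * (s + 1)))) := by
        rw [← ENNReal.tsum_mul_left]
        exact ENNReal.tsum_le_tsum hBle
    _ ≤ 2 * ENNReal.ofReal (1 / a) := by gcongr; exact tsum_exp_neg_mul_succ_le (by positivity)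
    _ = ENNReal.ofReal (r ^ 2 / (ε * δ ^ 2)) := by
        rw [← ENNReal.ofReal_ofNat 2, ← ENNReal.ofReal_mul (by norm_num)]
        congr 1
        simp only [a]
        field_simp

/-- Sliding-set deviation lemma: rewards of decision `k` are i.i.d. random
variables `X i ∈ [0, r]` with mean `r·θ` (so `E[μ̂_k(n)] = r·θ`), `μ̂_k(n)` is
the empirical average over the `t_k(n)` selections of `k` before `n`.  If a
random set of instants `Λ ⊆ ⋃_{s≥1} Λ(s)` is such that each `Λ(s)` has at most
one element, `t_k(n) ≥ ε·s` for `n ∈ Λ(s)`, and `{n ∈ Λ(s)}` is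
`F_n`-measurable, then the expected number of instants `n ∈ Λ` with
`|μ̂_k(n) − E[μ̂_k(n)]| > δ` is at most `r²/(ε·δ²)`. -/
theorem sliding_set_deviation {Ω : Type*} {m0 : MeasurableSpace Ω}
    (μ : Measure Ω) [IsProbabilityMeasure μ] (F : Filtration ℕ m0)
    (r θ : ℝ) (hr : 0 < r) (hθ : θ ∈ Set.Icc (0:ℝ) 1)
    (X : ℕ → Ω → ℝ) (hXmeas : ∀ i, Measurable (X i))
    (hXindep : iIndepFun X μ)
    (hXbound : ∀ i, ∀ᵐ ω ∂μ, X i ω ∈ Set.Icc 0 r)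
    (hXmean : ∀ i, ∫ ω, X i ω ∂μ = r * θ)
    (hXadapted : Adapted F X)
    (tk : ℕ → Ω → ℕ) (μhat : ℕ → Ω → ℝ)
    (hμhat : ∀ n ω, μhat n ω = (1 / (tk n ω : ℝ)) * ∑ i ∈ Finset.range (tk n ω), X i ω)
    (ε δ : ℝ) (hε : 0 < ε) (hδ : 0 < δ)
    (Λ : Ω → Set ℕ) (Λs : ℕ → Ω → Set ℕ)
    (hcover : ∀ ω, Λ ω ⊆ ⋃ s ≥ 1, Λs s ω)
    (hcount : ∀ s : ℕ, 1 ≤ s → ∀ ω, ∀ n ∈ Λs s ω, ε * s ≤ (tk n ω : ℝ))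
    (hsingle : ∀ s ω, (Λs s ω).Subsingleton)
    (hmeasΛs : ∀ s n : ℕ, MeasurableSet[F n] {ω | n ∈ Λs s ω}) :
    ∫⁻ ω, ∑' n : ℕ,
        Set.indicator {ω' | n ∈ Λ ω' ∧ δ < |μhat n ω' - r * θ|} (fun _ => (1 : ℝ≥0∞)) ω ∂μ
      ≤ ENNReal.ofReal (r ^ 2 / (ε * δ ^ 2)) :=
  sliding_set_deviation_general (m0 := m0) μ r θ hr X hXmeas hXindep hXbound hXmean tk μhat hμhat ε
    δ hε hδ Λ Λs hcover hcount hsingle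
end

section
/- Let θ ∈ [0,1]^K be unimodal with peak k* (with respect to rates r₁ < ⋯ < r_K) and fix k > k*. For ε > 0 define λ_ε ∈ [0,1]^K by λ_l = (1 + (l−k*)ε)·r_{k*}θ_{k*}/r_l for k* ≤ l ≤ k and λ_l = θ_l otherwise. Then for ε small enough λ_ε is unimodal with r_k(λ_ε)_k > r_{k*}(λ_ε)_{k*} = r_{k*}θ_{k*}, and Σ_{l≠k*} I(θ_l, (λ_ε)_l) → Σ_{l=k*+1}^k I(θ_l, r_{k*}θ_{k*}/r_l) as ε → 0⁺. -/
/-!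
Write `c = r_{k*} θ_{k*}`. On the band `k* ≤ l ≤ k` the construction sets
`r_l (λ_ε)_l = (1 + (l - k*) ε) c`, which is strictly increasing in `l` for `ε > 0`, and
`r_k (λ_ε)_k > c > r_k θ_k > r_{k+1} θ_{k+1}`, so the peak moves to `k` while nothing changes
outside the band. Each `(λ_ε)_l` is affine in `ε`, and at `ε = 0` every coordinate lies in `(0, 1)`;
continuity then gives `λ_ε ∈ [0,1]^K` for small `ε`, and continuity of `I(p, ·)` on `(0, 1)` gives
the limit, whose terms outside the band vanish because `I(p, p) = 0`.
-/

/-- Bernoulli Kullback–Leibler divergence. -/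
noncomputable def klBer (p q : ℝ) : ℝ :=
  p * Real.log (p / q) + (1 - p) * Real.log ((1 - p) / (1 - q))

/-- `η` is unimodal with peak `kstar` with respect to the rates `r` on
decisions `1,…,K`. -/
def UnimodalPeak (K kstar : ℕ) (r η : ℕ → ℝ) : Prop :=
  (∀ l, 1 ≤ l → l + 1 ≤ kstar → r l * η l < r (l + 1) * η (l + 1)) ∧
  (∀ l, kstar ≤ l → l + 1 ≤ K → r (l + 1) * η (l + 1) < r l * η l)

open Filter Topology Finset

lemma klBer_self (p : ℝ) : klBer p p = 0 := by
  rcases eq_or_ne p 0 with rfl | hp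
  · simp [klBer]
  rcases eq_or_ne (1 - p) 0 with hp' | hp'
  · simp [klBer, hp']
  simp [klBer, div_self hp, div_self hp']

lemma continuousAt_mul_log_div (a : ℝ) {x : ℝ} (hx : x ≠ 0) :
    ContinuousAt (fun y => a * Real.log (a / y)) x := by
  rcases eq_or_ne a 0 with rfl | ha
  · simpa using continuousAt_const
  exact continuousAt_const.mul
    ((continuousAt_const.div continuousAt_id hx).log (div_ne_zero ha hx))

lemma continuousAt_klBer_right (p : ℝ) {q : ℝ} (hq₀ : 0 < q) (hq₁ : q < 1) :
    ContinuousAt (klBer p) q :=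
  (continuousAt_mul_log_div p hq₀.ne').add
    ((continuousAt_mul_log_div (1 - p) (sub_pos.2 hq₁).ne').comp
      (continuousAt_const.sub continuousAt_id))

/-- The paper's `λ_ε`, as a function of `ε` and the coordinate `l`. -/
noncomputable def confusingParam (r θ : ℕ → ℝ) (kstar k : ℕ) (ε : ℝ) (l : ℕ) : ℝ :=
  if kstar ≤ l ∧ l ≤ k then (1 + ((l : ℝ) - (kstar : ℝ)) * ε) * (r kstar * θ kstar) / r l
  else θ l

namespace confusingParam

variable {K : ℕ} {r θ : ℕ → ℝ} {kstar k : ℕ} {ε : ℝ} {l : ℕ}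

lemma apply_of_lt_or_lt (hl : l < kstar ∨ k < l) : confusingParam r θ kstar k ε l = θ l := by
  rw [confusingParam, if_neg (by omega)]

lemma rate_mul_apply (h₁ : kstar ≤ l) (h₂ : l ≤ k) (hr : r l ≠ 0) :
    r l * confusingParam r θ kstar k ε l = (1 + ((l : ℝ) - kstar) * ε) * (r kstar * θ kstar) := by
  rw [confusingParam, if_pos ⟨h₁, h₂⟩, mul_div_cancel₀ _ hr]

lemma apply_kstar (hk : kstar ≤ k) (hr : r kstar ≠ 0) :
    confusingParam r θ kstar k ε kstar = θ kstar := by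
  have h := rate_mul_apply (θ := θ) (ε := ε) le_rfl hk hr
  rw [sub_self, zero_mul, add_zero, one_mul] at h
  exact mul_left_cancel₀ hr h

lemma continuous (r θ : ℕ → ℝ) (kstar k l : ℕ) :
    Continuous fun ε => confusingParam r θ kstar k ε l := by
  unfold confusingParam
  split_ifs <;> fun_prop

lemma zero_mem_Ioo (hr : ∀ l, 0 < r l) (hc : 0 < r kstar * θ kstar)
    (hratio : ∀ l, kstar ≤ l → l ≤ k → r kstar * θ kstar / r l < 1)
    (hθ : θ l ∈ Set.Ioo 0 1) : confusingParam r θ kstar k 0 l ∈ Set.Ioo 0 1 := by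
  unfold confusingParam
  split_ifs with hl
  · rw [mul_zero, add_zero, one_mul]
    exact ⟨div_pos hc (hr l), hratio l hl.1 hl.2⟩
  · exact hθ

lemma sum_klBer_zero (hkK : k ≤ K) (hkstar : 1 ≤ kstar) :
    ∑ l ∈ (Icc 1 K).erase kstar, klBer (θ l) (confusingParam r θ kstar k 0 l) =
      ∑ l ∈ Icc (kstar + 1) k, klBer (θ l) (r kstar * θ kstar / r l) := by
  have hsub : Icc (kstar + 1) k ⊆ (Icc 1 K).erase kstar := by
    intro l hl
    simp only [mem_Icc, mem_erase] at hl ⊢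
    omega
  rw [← sum_subset hsub]
  · refine sum_congr rfl fun l hl => ?_
    rw [mem_Icc] at hl
    rw [confusingParam, if_pos ⟨by omega, hl.2⟩, mul_zero, add_zero, one_mul]
  · intro l hl hl'
    simp only [mem_Icc, mem_erase] at hl hl'
    rw [apply_of_lt_or_lt (by omega), klBer_self]

lemma unimodalPeak (hr : ∀ l, r l ≠ 0) (hc : 0 < r kstar * θ kstar) (hk : kstar ≤ k)
    (hθ : UnimodalPeak K kstar r θ) (hθk : r k * θ k < r kstar * θ kstar) (hε : 0 < ε) :
    UnimodalPeak K k r (confusingParam r θ kstar k ε) := by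
  constructor
  · intro l hl hlk
    by_cases hkl : kstar ≤ l
    · rw [rate_mul_apply hkl (by omega) (hr l), rate_mul_apply (by omega) hlk (hr _)]
      push_cast
      nlinarith [mul_pos hε hc]
    · have hl' : confusingParam r θ kstar k ε (l + 1) = θ (l + 1) := by
        rcases Nat.lt_or_ge (l + 1) kstar with h | h
        · exact apply_of_lt_or_lt (.inl h)
        · rw [show l + 1 = kstar by omega, apply_kstar hk (hr kstar)]
      rw [apply_of_lt_or_lt (.inl (by omega)), hl']
      exact hθ.1 l hl (by omega)
  · intro l hkl hlK
    rw [apply_of_lt_or_lt (.inr (by omega))]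
    rcases hkl.lt_or_eq with hkl | rfl
    · rw [apply_of_lt_or_lt (.inr hkl)]
      exact hθ.2 l (by omega) hlK
    · have hkk : (0 : ℝ) ≤ ((k : ℝ) - kstar) * ε := mul_nonneg (by simpa using hk) hε.le
      rw [rate_mul_apply hk le_rfl (hr k)]
      nlinarith [hθ.2 k hk hlK]

lemma rate_mul_apply_kstar_lt (hr : ∀ l, r l ≠ 0) (hc : 0 < r kstar * θ kstar) (hk : kstar < k)
    (hε : 0 < ε) :
    r kstar * confusingParam r θ kstar k ε kstar < r k * confusingParam r θ kstar k ε k := by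
  have hkk : (0 : ℝ) < ((k : ℝ) - kstar) * ε := mul_pos (by simpa using hk) hε
  rw [apply_kstar hk.le (hr kstar), rate_mul_apply hk.le le_rfl (hr k)]
  nlinarith

end confusingParam

theorem lambda_eps_construction_general (K : ℕ) (r θ : ℕ → ℝ) (kstar k : ℕ)
    (hrpos : ∀ l, 0 < r l)
    (hθ : ∀ l, 1 ≤ l → l ≤ K → θ l ∈ Set.Ioo (0:ℝ) 1)
    (hkstar : 1 ≤ kstar) (hk : kstar < k) (hkK : k ≤ K)
    (hθuni : UnimodalPeak K kstar r θ)
    (hratio : ∀ l, kstar ≤ l → l ≤ k → r kstar * θ kstar / r l < 1)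
    (hstrict : ∀ l, kstar < l → l ≤ k → θ l < r kstar * θ kstar / r l)
    (lamε : ℝ → ℕ → ℝ)
    (hlam : ∀ ε l, lamε ε l =
      if kstar ≤ l ∧ l ≤ k then
        (1 + ((l : ℝ) - (kstar : ℝ)) * ε) * (r kstar * θ kstar) / r l
      else θ l) :
    (∃ ε₀ > (0:ℝ), ∀ ε : ℝ, 0 < ε → ε < ε₀ →
        (∀ l, 1 ≤ l → l ≤ K → lamε ε l ∈ Set.Icc (0:ℝ) 1) ∧
        UnimodalPeak K k r (lamε ε) ∧
        lamε ε kstar = θ kstar ∧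
        r kstar * lamε ε kstar < r k * lamε ε k) ∧
    Filter.Tendsto
      (fun ε => ∑ l ∈ (Finset.Icc 1 K).erase kstar, klBer (θ l) (lamε ε l))
      (nhdsWithin 0 (Set.Ioi 0))
      (nhds (∑ l ∈ Finset.Icc (kstar + 1) k, klBer (θ l) (r kstar * θ kstar / r l))) := by
  obtain rfl : lamε = confusingParam r θ kstar k := funext₂ hlam
  have hr l : r l ≠ 0 := (hrpos l).ne'
  have hc : 0 < r kstar * θ kstar := mul_pos (hrpos kstar) (hθ kstar hkstar (by omega)).1
  have hθk : r k * θ k < r kstar * θ kstar := by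
    simpa [mul_comm] using (lt_div_iff₀ (hrpos k)).1 (hstrict k hk le_rfl)
  have hzero : ∀ l ∈ Icc 1 K, confusingParam r θ kstar k 0 l ∈ Set.Ioo 0 1 := fun l hl => by
    rw [mem_Icc] at hl
    exact confusingParam.zero_mem_Ioo hrpos hc hratio (hθ l hl.1 hl.2)
  have htends l : Tendsto (fun ε => confusingParam r θ kstar k ε l) (𝓝[>] 0)
      (𝓝 (confusingParam r θ kstar k 0 l)) :=
    ((confusingParam.continuous r θ kstar k l).tendsto 0).mono_left nhdsWithin_le_nhds
  constructor
  · have hmem : ∀ᶠ ε in 𝓝[>] 0, ∀ l ∈ Icc 1 K, confusingParam r θ kstar k ε l ∈ Set.Ioo 0 1 :=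
      (eventually_all_finset _).2 fun l hl => htends l (isOpen_Ioo.mem_nhds (hzero l hl))
    obtain ⟨ε₀, hε₀, h⟩ := (nhdsGT_basis (0 : ℝ)).eventually_iff.1 hmem
    refine ⟨ε₀, hε₀, fun ε hε hεε₀ => ⟨fun l hl hlK => ?_, ?_, ?_, ?_⟩⟩
    · exact Set.Ioo_subset_Icc_self (h ⟨hε, hεε₀⟩ l (mem_Icc.2 ⟨hl, hlK⟩))
    · exact confusingParam.unimodalPeak hr hc hk.le hθuni hθk hε
    · exact confusingParam.apply_kstar hk.le (hr kstar)
    · exact confusingParam.rate_mul_apply_kstar_lt hr hc hk hε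
  · rw [← confusingParam.sum_klBer_zero hkK hkstar]
    refine tendsto_finsetSum _ fun l hl => ?_
    have h01 := hzero l (mem_of_mem_erase hl)
    exact (continuousAt_klBer_right (θ l) h01.1 h01.2).tendsto.comp (htends l)

/-- The confusing-parameter construction `λ_ε`: for small `ε > 0` it is a valid
unimodal parameter making `k` strictly better than `k*`, agreeing with `θ` at
`k*`, and `∑_{l≠k*} I(θ_l,(λ_ε)_l) → ∑_{l=k*+1}^k I(θ_l, r_{k*}θ_{k*}/r_l)` as
`ε → 0⁺`. -/
theorem lambda_eps_construction (K : ℕ) (r θ : ℕ → ℝ) (kstar k : ℕ)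
    (hrpos : ∀ l, 0 < r l) (hrmono : ∀ l, 1 ≤ l → l + 1 ≤ K → r l < r (l + 1))
    (hθ : ∀ l, 1 ≤ l → l ≤ K → θ l ∈ Set.Ioo (0:ℝ) 1)
    (hkstar : 1 ≤ kstar) (hk : kstar < k) (hkK : k ≤ K)
    (hθuni : UnimodalPeak K kstar r θ)
    (hratio : ∀ l, kstar ≤ l → l ≤ k → r kstar * θ kstar / r l < 1)
    (hstrict : ∀ l, kstar < l → l ≤ k → θ l < r kstar * θ kstar / r l)
    (lamε : ℝ → ℕ → ℝ)
    (hlam : ∀ ε l, lamε ε l =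
      if kstar ≤ l ∧ l ≤ k then
        (1 + ((l : ℝ) - (kstar : ℝ)) * ε) * (r kstar * θ kstar) / r l
      else θ l) :
    (∃ ε₀ > (0:ℝ), ∀ ε : ℝ, 0 < ε → ε < ε₀ →
        (∀ l, 1 ≤ l → l ≤ K → lamε ε l ∈ Set.Icc (0:ℝ) 1) ∧
        UnimodalPeak K k r (lamε ε) ∧
        lamε ε kstar = θ kstar ∧
        r kstar * lamε ε kstar < r k * lamε ε k) ∧
    Filter.Tendsto
      (fun ε => ∑ l ∈ (Finset.Icc 1 K).erase kstar, klBer (θ l) (lamε ε l))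
      (nhdsWithin 0 (Set.Ioi 0))
      (nhds (∑ l ∈ Finset.Icc (kstar + 1) k, klBer (θ l) (r kstar * θ kstar / r l))) :=
  lambda_eps_construction_general K r θ kstar k hrpos hθ hkstar hk hkK hθuni hratio hstrict lamε
    hlam
end
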